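/- arXiv:1904.12660 — 5 statements merged into one kernel-verified Lean document; each statement's English description precedes it below -/
import Mathlib

section
/- Let p_1, …, p_n ∈ ℂ with Re p_k > 0 for all k, let v ∈ ℂ^m be a unit vector, and let s ∈ ℂ with s ≠ −conj(p_k) for all k. Then the product of the rank-one matrix Blaschke factors all having the same direction v satisfies ∏_{k=1}^n (I − (2 Re p_k / (s + conj(p_k))) v v^H) = I + (∏_{k=1}^n ((s − p_k)/(s + conj(p_k))) − 1) v v^H. (Product formula for Blaschke factors with parallel pole directions, underlying Corollary 3(a).) -/
open Matrix

/-!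
Since `vᴴ v = 1`, the matrix `P = v vᴴ` is idempotent, so `a ↦ 1 + (a - 1) • P = (1 - P) + a • P`
is multiplicative: it scales the range of `P` by `a` and fixes the range of `1 - P`. Each Blaschke
factor is this map evaluated at the scalar Blaschke factor `(s - p) / (s + conj p)`, because
`s - p - (s + conj p) = -2 Re p`; hence the matrix product is the map evaluated at the scalar product.
-/

theorem Matrix.isIdempotentElem_vecMulVec {n R : Type*} [Fintype n] [Semiring R] {u w : n → R}
    (h : w ⬝ᵥ u = 1) : IsIdempotentElem (vecMulVec u w) := by
  rw [IsIdempotentElem, vecMulVec_mul_vecMulVec, h, one_smul]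

namespace IsIdempotentElem

variable {K A : Type*} [CommRing K] [Ring A] [Algebra K A] {P : A}

theorem one_add_sub_one_smul_mul (hP : IsIdempotentElem P) (a b : K) :
    (1 + (a - 1) • P) * (1 + (b - 1) • P) = 1 + (a * b - 1) • P := by
  simp only [mul_add, add_mul, one_mul, mul_one, smul_mul_assoc, mul_smul_comm, hP.eq]
  module

def scaleRangeHom (hP : IsIdempotentElem P) : K →* A where
  toFun a := 1 + (a - 1) • P
  map_one' := by simp
  map_mul' a b := (hP.one_add_sub_one_smul_mul a b).symm

theorem list_prod_ofFn_one_add_sub_one_smul (hP : IsIdempotentElem P) {n : ℕ} (a : Fin n → K) :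
    (List.ofFn fun k => 1 + (a k - 1) • P).prod = 1 + ((∏ k, a k) - 1) • P := by
  have h := map_list_prod hP.scaleRangeHom (List.ofFn a)
  rw [List.map_ofFn, Fin.prod_ofFn] at h
  exact h.symm

end IsIdempotentElem

theorem Complex.div_add_conj_sub_one {s p : ℂ} (hs : s + (starRingEnd ℂ) p ≠ 0) :
    (s - p) / (s + starRingEnd ℂ p) - 1 = -((2 * p.re : ℂ) / (s + starRingEnd ℂ p)) := by
  rw [div_sub_one hs, ← neg_div, Complex.re_eq_add_conj]
  ring

theorem blaschke_product_parallel_directions_general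
    (m n : ℕ) (p : Fin n → ℂ)
    (v : Fin m → ℂ) (hv : ∑ i, starRingEnd ℂ (v i) * v i = 1)
    (s : ℂ) (hs : ∀ k, s ≠ -starRingEnd ℂ (p k)) :
    (List.ofFn (fun k : Fin n =>
        (1 : Matrix (Fin m) (Fin m) ℂ) -
          ((2 * (p k).re : ℂ) / (s + starRingEnd ℂ (p k))) •
            Matrix.vecMulVec v (fun i => starRingEnd ℂ (v i)))).prod
      = 1 + ((∏ k, (s - p k) / (s + starRingEnd ℂ (p k))) - 1) •
          Matrix.vecMulVec v (fun i => starRingEnd ℂ (v i)) := by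
  have hP : IsIdempotentElem (vecMulVec v fun i => starRingEnd ℂ (v i)) :=
    isIdempotentElem_vecMulVec hv
  have hden (k : Fin n) : s + starRingEnd ℂ (p k) ≠ 0 :=
    fun h => hs k (eq_neg_of_add_eq_zero_left h)
  simp only [sub_eq_add_neg (1 : Matrix _ _ ℂ), ← neg_smul, ← Complex.div_add_conj_sub_one (hden _)]
  exact hP.list_prod_ofFn_one_add_sub_one_smul _

/-- Product formula for rank-one matrix Blaschke factors with a common (parallel)
direction `v`:
`∏_{k} (I - (2 Re p_k/(s + conj p_k)) v vᴴ) = I + (∏_k (s - p_k)/(s + conj p_k) - 1) v vᴴ`. -/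
theorem blaschke_product_parallel_directions
    (m n : ℕ) (p : Fin n → ℂ) (hp : ∀ k, 0 < (p k).re)
    (v : Fin m → ℂ) (hv : ∑ i, starRingEnd ℂ (v i) * v i = 1)
    (s : ℂ) (hs : ∀ k, s ≠ -starRingEnd ℂ (p k)) :
    (List.ofFn (fun k : Fin n =>
        (1 : Matrix (Fin m) (Fin m) ℂ) -
          ((2 * (p k).re : ℂ) / (s + starRingEnd ℂ (p k))) •
            Matrix.vecMulVec v (fun i => starRingEnd ℂ (v i)))).prod
      = 1 + ((∏ k, (s - p k) / (s + starRingEnd ℂ (p k))) - 1) •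
          Matrix.vecMulVec v (fun i => starRingEnd ℂ (v i)) :=
  blaschke_product_parallel_directions_general m n p v hv s hs
end

section
/- Let f and g be rational functions with complex coefficients, both strictly proper (numerator degree strictly less than denominator degree), such that every pole of f has strictly negative real part and every pole of g has strictly positive real part. Then ∫_{−∞}^{∞} conj(f(iω)) · g(iω) dω = 0. (Orthogonality of the stable subspace H₂ and the antistable subspace H₂^⊥ of L₂ of the imaginary axis, for rational functions.) -/
/-!
On the imaginary axis `conj (iω) = -iω`, so `conj (f (iω)) = f̄ (-iω)` where `f̄` has the
conjugated coefficients. The integrand is thus the restriction to the imaginary axis of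
`u s = f̄ (-s) * g s`, a rational function with all its poles in the open right half-plane and
`u s = O(|s|⁻²)` at infinity. By Cauchy's theorem on the rectangle `[-R, 0] × [-R, R]`, the
integral of `u` over `[-iR, iR]` equals that over the three other sides, which is `O(1/R)`;
letting `R → ∞` gives `0`.
-/

open Polynomial Complex MeasureTheory Filter Asymptotics Bornology intervalIntegral Set Topology

theorem Polynomial.isBigO_cobounded_div_of_degree_lt {𝕜 : Type*} [NormedField 𝕜]
    {p q : 𝕜[X]} (h : p.degree < q.degree) :
    (fun s => p.eval s / q.eval s) =O[cobounded 𝕜] fun s => s⁻¹ := by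
  have hpX : (fun s => (p * X).eval s) =O[cobounded 𝕜] q.eval :=
    isBigO_cobounded_of_degree_le (by
      rw [degree_mul, degree_X]; exact Nat.WithBot.add_one_le_of_lt h)
  have hq : ∀ᶠ s in cobounded 𝕜, q.eval s ≠ 0 :=
    le_cofinite 𝕜 (eventually_cofinite_not_isRoot (ne_zero_of_degree_gt h))
  refine (hpX.mul (isBigO_refl (fun s => (q.eval s)⁻¹ * s⁻¹) _)).congr' ?_ ?_
  · filter_upwards [hq, eventually_ne_cobounded 0] with s hq hs
    simp only [eval_mul, eval_X]
    field_simp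
  · filter_upwards [hq] with s hq
    field_simp

theorem isBigO_cobounded_comp_neg_mul {𝕜 : Type*} [NormedField 𝕜] {φ ψ : 𝕜 → 𝕜}
    (hφ : φ =O[cobounded 𝕜] fun s => s⁻¹) (hψ : ψ =O[cobounded 𝕜] fun s => s⁻¹) :
    (fun s => φ (-s) * ψ s) =O[cobounded 𝕜] fun s => (s ^ 2)⁻¹ :=
  ((hφ.comp_tendsto tendsto_neg_cobounded).mul hψ).trans <|
    isBigO_of_le _ fun s => by simp [pow_two]

theorem isBigO_inv_sq_inv_one_add_sq_cocompact :
    (fun ω : ℝ => (ω ^ 2)⁻¹) =O[cocompact ℝ] fun ω => (1 + ω ^ 2)⁻¹ := by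
  refine IsBigO.of_bound 2 ?_
  filter_upwards [tendsto_norm_cocompact_atTop.eventually_ge_atTop 1] with ω hω
  have h1 : 1 ≤ ω ^ 2 := (one_le_sq_iff_one_le_abs ω).2 hω
  have : 0 < ω ^ 2 := by linarith
  rw [norm_inv, norm_inv, Real.norm_of_nonneg this.le, Real.norm_of_nonneg (by positivity)]
  rw [inv_eq_one_div, ← div_eq_mul_inv, div_le_div_iff₀ this (by positivity)]
  linarith

section

variable {E : Type*} [NormedAddCommGroup E]

theorem integrable_of_isBigO_cocompact_inv_sq {v : ℝ → E} (hv : Continuous v)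
    (hdecay : v =O[cocompact ℝ] fun ω => (ω ^ 2)⁻¹) : Integrable v :=
  hv.locallyIntegrable.integrable_of_isBigO_cocompact
    (hdecay.trans isBigO_inv_sq_inv_one_add_sq_cocompact)
    (integrable_inv_one_add_sq.integrableAtFilter _)

variable [NormedSpace ℂ E]

theorem norm_intervalIntegral_imaginaryAxis_le {u : ℂ → E}
    (hu : DifferentiableOn ℂ u {s | s.re ≤ 0})
    {R M : ℝ} (hR : 0 ≤ R) (hM : ∀ s : ℂ, R ≤ ‖s‖ → ‖u s‖ ≤ M) :
    ‖∫ ω in -R..R, u (I * ω)‖ ≤ 4 * R * M := by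
  have hrect := integral_boundary_rect_eq_zero_of_differentiableOn u ⟨-R, -R⟩ ⟨0, R⟩ <|
    hu.mono fun s hs => by
      have h : s.re ∈ Icc (-R) 0 := uIcc_of_le (neg_nonpos.2 hR) ▸ hs.1
      exact h.2
  simp only [ofReal_zero, zero_add, mul_comm I] at hrect ⊢
  set bottom := ∫ x in -R..0, u (x + (-R : ℝ) * I)
  set top := ∫ x in -R..0, u (x + (R : ℝ) * I)
  set left := ∫ y in -R..R, u ((-R : ℝ) + y * I)
  have hside : ∀ (a b : ℝ) (γ : ℝ → ℂ), a ≤ b → (∀ t, R ≤ ‖γ t‖) →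
      ‖∫ t in a..b, u (γ t)‖ ≤ M * (b - a) := fun a b γ hab hγ =>
    (norm_integral_le_of_norm_le_const fun t _ => hM _ (hγ t)).trans_eq <| by
      rw [abs_of_nonneg (sub_nonneg.2 hab)]
  have hbottom : ‖bottom‖ ≤ M * (0 - -R) := hside _ _ _ (by linarith) fun x => by
    simpa [abs_of_nonneg hR] using abs_im_le_norm (x + (-R : ℝ) * I)
  have htop : ‖top‖ ≤ M * (0 - -R) := hside _ _ _ (by linarith) fun x => by
    simpa [abs_of_nonneg hR] using abs_im_le_norm (x + (R : ℝ) * I)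
  have hleft : ‖left‖ ≤ M * (R - -R) := hside _ _ _ (by linarith) fun y => by
    simpa [abs_of_nonneg hR] using abs_re_le_norm ((-R : ℝ) + y * I)
  calc ‖∫ ω in -R..R, u (ω * I)‖ = ‖I • ∫ ω in -R..R, u (ω * I)‖ := by
        rw [norm_smul, norm_I, one_mul]
    _ = ‖top - bottom + I • left‖ := by
        congr 1
        linear_combination (norm := module) hrect
    _ ≤ ‖top‖ + ‖bottom‖ + ‖left‖ := by
        grw [norm_add_le, norm_sub_le, norm_smul, norm_I, one_mul]
    _ ≤ 4 * R * M := by linarith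

theorem integral_imaginaryAxis_eq_zero_of_isBigO {u : ℂ → E}
    (hu : DifferentiableOn ℂ u {s | s.re ≤ 0})
    (hdecay : u =O[cobounded ℂ] fun s => (s ^ 2)⁻¹) : ∫ ω : ℝ, u (I * ω) = 0 := by
  have hI : Tendsto (fun ω : ℝ => I * ω) (cocompact ℝ) (cobounded ℂ) := by
    rw [← tendsto_norm_atTop_iff_cobounded]
    exact (tendsto_norm_cocompact_atTop (E := ℝ)).congr fun ω => by simp
  have hint : Integrable fun ω : ℝ => u (I * ω) := by
    refine integrable_of_isBigO_cocompact_inv_sq ?_ ((hdecay.comp_tendsto hI).trans ?_)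
    · exact hu.continuousOn.comp_continuous (by fun_prop) fun ω => by simp
    · exact isBigO_of_le _ fun ω => by simp [mul_pow]
  obtain ⟨c, hc, hbound⟩ := hdecay.exists_nonneg
  obtain ⟨r, -, hr⟩ := hasBasis_cobounded_norm.eventually_iff.1 hbound.bound
  have hsmall : Tendsto (fun R : ℝ => ∫ ω in -R..R, u (I * ω)) atTop (𝓝 0) := by
    have hlim : Tendsto (fun R : ℝ => 4 * c / R) atTop (𝓝 0) :=
      tendsto_const_nhds.div_atTop tendsto_id
    refine squeeze_zero_norm' ?_ hlim
    filter_upwards [eventually_ge_atTop (max r 1)] with R hR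
    have hR0 : 0 < R := by linarith [le_max_right r 1]
    refine (norm_intervalIntegral_imaginaryAxis_le hu hR0.le (M := c / R ^ 2) fun s hs => ?_)
      |>.trans_eq (by field_simp)
    refine (hr (le_trans (le_max_left r 1) (hR.trans hs))).trans ?_
    rw [norm_inv, norm_pow, ← div_eq_mul_inv]
    gcongr
  exact tendsto_nhds_unique
    (intervalIntegral_tendsto_integral hint tendsto_neg_atTop_atBot tendsto_id) hsmall

end

/-- Orthogonality of the stable and antistable subspaces of `L²` of the imaginary
axis, for strictly proper rational functions: if every pole of `f` has negative real
part and every pole of `g` has positive real part, then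
`∫ conj(f(iω)) g(iω) dω = 0`. -/
theorem stable_antistable_orthogonality
    (f g : RatFunc ℂ)
    (hf_sp : f.num.degree < f.denom.degree)
    (hg_sp : g.num.degree < g.denom.degree)
    (hf_poles : ∀ x : ℂ, Polynomial.eval x f.denom = 0 → x.re < 0)
    (hg_poles : ∀ x : ℂ, Polynomial.eval x g.denom = 0 → 0 < x.re) :
    ∫ ω : ℝ, starRingEnd ℂ (RatFunc.eval (RingHom.id ℂ) (Complex.I * (ω : ℂ)) f) *
        RatFunc.eval (RingHom.id ℂ) (Complex.I * (ω : ℂ)) g = 0 := by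
  set fp := f.num.map (starRingEnd ℂ)
  set fq := f.denom.map (starRingEnd ℂ)
  have hfq : ∀ s : ℂ, s.re ≤ 0 → fq.eval (-s) ≠ 0 := fun s hs h => by
    rw [← conj_conj (-s), eval_map_apply, map_eq_zero] at h
    have := hf_poles _ h
    rw [conj_re, neg_re] at this
    linarith
  have hgq : ∀ s : ℂ, s.re ≤ 0 → g.denom.eval s ≠ 0 := fun s hs h =>
    (hg_poles s h).not_ge hs
  have hdiff : DifferentiableOn ℂ
      (fun s => fp.eval (-s) / fq.eval (-s) * (g.num.eval s / g.denom.eval s)) {s | s.re ≤ 0} :=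
    fun s hs => (((fp.differentiableAt.comp s differentiableAt_id.neg).div
      (fq.differentiableAt.comp s differentiableAt_id.neg) (hfq s hs)).mul
      (g.num.differentiableAt.div g.denom.differentiableAt (hgq s hs))).differentiableWithinAt
  have hdecay := isBigO_cobounded_comp_neg_mul
    (isBigO_cobounded_div_of_degree_lt (p := fp) (q := fq)
      (by simpa only [fp, fq, degree_map] using hf_sp))
    (isBigO_cobounded_div_of_degree_lt hg_sp)
  refine (MeasureTheory.integral_congr_ae (ae_of_all _ fun ω => ?_)).trans
    (integral_imaginaryAxis_eq_zero_of_isBigO hdiff hdecay)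
  have hconj : -(I * ω) = starRingEnd ℂ (I * ω) := by simp
  simp only [fp, fq, hconj, eval_map_apply, RatFunc.eval, eval₂_id, map_div₀]
end

section
/- Let z_1, …, z_n ∈ ℂ with Re z_k > 0 for all k, and write b_k(s) = (s − z_k)/(s + conj(z_k)). Then for all indices 1 ≤ i < j ≤ n, (1/(2π)) ∫_{−∞}^{∞} conj(1 − b_i(iω)) · (∏_{k=i}^{j−1} b_k(iω)) · (1 − b_j(iω)) dω = 0. (Mutual orthogonality of the terms in the telescoping expansion 1 − ∏_k b_k = Σ_j (1 − b_j) ∏_{k<j} b_k, used to evaluate the Blaschke product energy.) -/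
/-!
On the imaginary axis `|b_i| = 1`, so `conj (1 - b_i) * b_i = b_i - |b_i|² = -(1 - b_i)`, and the
integrand equals `-(1 - b_i) (∏_{i<k<j} b_k) (1 - b_j)` evaluated at `s = iω`. This is
holomorphic on the closed right half-plane, where `|b_k| ≤ 1` and
`|1 - b_k(s)| = 2 Re z_k / |s + conj z_k| = O(1/|s|)`, so it is `O(1/|s|²)` there. Cauchy's
theorem on the rectangles `[0, R] × [-R, R]` then shows that its integral along the imaginary
axis vanishes.
-/

open Complex ComplexConjugate MeasureTheory Filter Topology Set
open scoped Interval

section HalfPlane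

variable {E : Type*} [NormedAddCommGroup E]

theorem integrable_of_continuous_of_norm_le_div_sq {g : ℝ → E} {C R₀ : ℝ} (hg : Continuous g)
    (hdecay : ∀ x : ℝ, R₀ ≤ |x| → ‖g x‖ ≤ C / x ^ 2) : Integrable g := by
  refine hg.locallyIntegrable.integrable_of_isBigO_cocompact (g := fun x : ℝ => (1 + x ^ 2)⁻¹)
    ?_ (integrable_inv_one_add_sq.integrableAtFilter _)
  refine Asymptotics.IsBigO.of_bound (2 * max C 0) ?_
  filter_upwards [tendsto_norm_cocompact_atTop.eventually_ge_atTop (max R₀ 1)] with x hx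
  rw [Real.norm_eq_abs] at hx
  have hx1 : 1 ≤ x ^ 2 := by nlinarith [le_max_right R₀ 1, sq_abs x, abs_nonneg x]
  calc ‖g x‖ ≤ C / x ^ 2 := hdecay x (le_of_max_le_left hx)
    _ ≤ max C 0 / x ^ 2 := by gcongr; exact le_max_left _ _
    _ ≤ 2 * max C 0 * ‖(1 + x ^ 2)⁻¹‖ := by
      rw [norm_inv, Real.norm_of_nonneg (by positivity), ← div_eq_mul_inv,
        div_le_div_iff₀ (by positivity) (by positivity)]
      nlinarith [le_max_right C 0]

theorem tendsto_intervalIntegral_of_norm_le_div_sq [NormedSpace ℝ E] {f : ℂ → E} {S : Set ℂ}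
    {C R₀ L : ℝ} (hdecay : ∀ s ∈ S, R₀ ≤ ‖s‖ → ‖f s‖ ≤ C / ‖s‖ ^ 2) {γ : ℝ → ℝ → ℂ} {a b : ℝ → ℝ}
    (hγ : ∀ᶠ R in atTop, |b R - a R| ≤ L * R ∧ ∀ t ∈ Ι (a R) (b R), γ R t ∈ S ∧ R ≤ ‖γ R t‖) :
    Tendsto (fun R => ∫ t in a R..b R, f (γ R t)) atTop (𝓝 0) := by
  refine squeeze_zero_norm' (a := fun R => max C 0 * L / R) ?_
    (tendsto_const_nhds.div_atTop tendsto_id)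
  filter_upwards [hγ, eventually_gt_atTop (max R₀ 0)] with R ⟨hlen, hpath⟩ hR
  have hR₀ : R₀ < R := lt_of_le_of_lt (le_max_left _ _) hR
  have hR0 : 0 < R := lt_of_le_of_lt (le_max_right _ _) hR
  have hbound : ∀ t ∈ Ι (a R) (b R), ‖f (γ R t)‖ ≤ max C 0 / R ^ 2 := by
    intro t ht
    obtain ⟨hS, hnorm⟩ := hpath t ht
    calc ‖f (γ R t)‖ ≤ C / ‖γ R t‖ ^ 2 := hdecay _ hS (by linarith)
      _ ≤ max C 0 / ‖γ R t‖ ^ 2 := by gcongr; exact le_max_left _ _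
      _ ≤ max C 0 / R ^ 2 := by gcongr
  calc ‖∫ t in a R..b R, f (γ R t)‖ ≤ max C 0 / R ^ 2 * |b R - a R| :=
        intervalIntegral.norm_integral_le_of_norm_le_const hbound
    _ ≤ max C 0 / R ^ 2 * (L * R) := by gcongr
    _ = max C 0 * L / R := by field_simp

theorem I_smul_intervalIntegral_I_mul_eq_of_differentiableOn [NormedSpace ℂ E] [CompleteSpace E]
    {f : ℂ → E} (hf : DifferentiableOn ℂ f {s | 0 ≤ s.re}) {R : ℝ} (hR : 0 ≤ R) :
    I • ∫ ω in -R..R, f (I * ω) =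
      (∫ x in (0 : ℝ)..R, f (x + (-R : ℝ) * I)) - (∫ x in (0 : ℝ)..R, f (x + R * I)) +
        I • ∫ y in -R..R, f (R + y * I) := by
  have h := integral_boundary_rect_eq_zero_of_differentiableOn f ⟨0, -R⟩ ⟨R, R⟩ <|
    hf.mono fun s hs => by
      rw [mem_reProdIm, uIcc_of_le hR] at hs
      exact hs.1.1
  simp only [ofReal_zero, zero_add] at h
  simp only [mul_comm I]
  exact (sub_eq_zero.mp h).symm

theorem tendsto_intervalIntegral_I_mul_of_differentiableOn [NormedSpace ℂ E] [CompleteSpace E]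
    {f : ℂ → E} {C R₀ : ℝ} (hf : DifferentiableOn ℂ f {s | 0 ≤ s.re})
    (hdecay : ∀ s : ℂ, 0 ≤ s.re → R₀ ≤ ‖s‖ → ‖f s‖ ≤ C / ‖s‖ ^ 2) :
    Tendsto (fun R : ℝ => ∫ ω in -R..R, f (I * ω)) atTop (𝓝 0) := by
  have hside : ∀ {γ : ℝ → ℝ → ℂ} {a b : ℝ → ℝ}, (∀ᶠ R in atTop, |b R - a R| ≤ 2 * R ∧
      ∀ t ∈ Ι (a R) (b R), 0 ≤ (γ R t).re ∧ R ≤ ‖γ R t‖) →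
      Tendsto (fun R => ∫ t in a R..b R, f (γ R t)) atTop (𝓝 0) :=
    tendsto_intervalIntegral_of_norm_le_div_sq (S := {s | 0 ≤ s.re}) hdecay
  have hbottom := hside (γ := fun R x => x + (-R : ℝ) * I) (a := fun _ => 0)
      (b := fun R => R) <| by
    filter_upwards [eventually_ge_atTop 0] with R hR
    refine ⟨by simp [abs_of_nonneg hR]; linarith, fun t ht => ⟨?_, ?_⟩⟩
    · rw [uIoc_of_le hR] at ht
      simpa using ht.1.le
    · simpa [abs_of_nonneg hR] using abs_im_le_norm ((t : ℂ) + (-R : ℝ) * I)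
  have htop := hside (γ := fun R x => x + R * I) (a := fun _ => 0) (b := fun R => R) <| by
    filter_upwards [eventually_ge_atTop 0] with R hR
    refine ⟨by simp [abs_of_nonneg hR]; linarith, fun t ht => ⟨?_, ?_⟩⟩
    · rw [uIoc_of_le hR] at ht
      simpa using ht.1.le
    · simpa [abs_of_nonneg hR] using abs_im_le_norm ((t : ℂ) + R * I)
  have hright := hside (γ := fun R y => R + y * I) (a := fun R => -R) (b := fun R => R) <| by
    filter_upwards [eventually_ge_atTop 0] with R hR
    refine ⟨by rw [sub_neg_eq_add, abs_of_nonneg (by linarith)]; linarith,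
      fun t _ => ⟨by simpa using hR, ?_⟩⟩
    simpa [abs_of_nonneg hR] using abs_re_le_norm ((R : ℂ) + t * I)
  have hsides : Tendsto (fun R : ℝ => I • ∫ ω in -R..R, f (I * ω)) atTop (𝓝 0) := by
    have h := (hbottom.sub htop).add (hright.const_smul I)
    simp only [sub_zero, add_zero, smul_zero] at h
    refine h.congr' ?_
    filter_upwards [eventually_ge_atTop 0] with R hR
    exact (I_smul_intervalIntegral_I_mul_eq_of_differentiableOn hf hR).symm
  rw [tendsto_zero_iff_norm_tendsto_zero] at hsides ⊢
  simpa [norm_smul] using hsides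

theorem integral_I_mul_eq_zero_of_differentiableOn [NormedSpace ℂ E] [CompleteSpace E]
    {f : ℂ → E} {C R₀ : ℝ} (hf : DifferentiableOn ℂ f {s | 0 ≤ s.re})
    (hdecay : ∀ s : ℂ, 0 ≤ s.re → R₀ ≤ ‖s‖ → ‖f s‖ ≤ C / ‖s‖ ^ 2) :
    ∫ ω : ℝ, f (I * ω) = 0 := by
  have hint : Integrable fun ω : ℝ => f (I * ω) := by
    refine integrable_of_continuous_of_norm_le_div_sq (C := C) (R₀ := R₀)
      (hf.continuousOn.comp_continuous (continuous_const.mul continuous_ofReal) fun ω => by simp)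
      fun ω hω => ?_
    simpa [sq_abs] using hdecay (I * ω) (by simp) (by simpa using hω)
  exact tendsto_nhds_unique
    (intervalIntegral_tendsto_integral hint tendsto_neg_atTop_atBot tendsto_id)
    (tendsto_intervalIntegral_I_mul_of_differentiableOn hf hdecay)

end HalfPlane

theorem normSq_add_conj (s z : ℂ) : normSq (s + conj z) = normSq (s - z) + 4 * s.re * z.re := by
  simp only [normSq_apply, add_re, add_im, sub_re, sub_im, conj_re, conj_im]
  ring

noncomputable def blaschke (z s : ℂ) : ℂ := (s - z) / (s + conj z)

section Blaschke

variable {z s : ℂ}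

theorem add_conj_ne_zero_of_re_nonneg (hs : 0 ≤ s.re) (hz : 0 < z.re) : s + conj z ≠ 0 := by
  intro h
  have h_re := congrArg re h
  simp only [add_re, conj_re, zero_re] at h_re
  linarith

theorem norm_blaschke_le_one (hs : 0 ≤ s.re) (hz : 0 < z.re) : ‖blaschke z s‖ ≤ 1 := by
  rw [blaschke, norm_div, div_le_one (norm_pos_iff.mpr (add_conj_ne_zero_of_re_nonneg hs hz)),
    ← sq_le_sq₀ (norm_nonneg _) (norm_nonneg _), ← normSq_eq_norm_sq, ← normSq_eq_norm_sq,
    normSq_add_conj]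
  have := mul_nonneg hs hz.le
  linarith

theorem norm_blaschke_of_re_eq_zero (hs : s.re = 0) (hz : 0 < z.re) : ‖blaschke z s‖ = 1 := by
  have hden := add_conj_ne_zero_of_re_nonneg hs.ge hz
  have h_sq : ‖s - z‖ ^ 2 = ‖s + conj z‖ ^ 2 := by
    rw [← normSq_eq_norm_sq, ← normSq_eq_norm_sq, normSq_add_conj, hs]
    ring
  rw [blaschke, norm_div, (sq_eq_sq₀ (norm_nonneg _) (norm_nonneg _)).mp h_sq,
    div_self (norm_ne_zero_iff.mpr hden)]

theorem one_sub_blaschke (h : s + conj z ≠ 0) : 1 - blaschke z s = 2 * z.re / (s + conj z) := by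
  have h_re : (2 * z.re : ℂ) = z + conj z := by
    rw [add_conj]
    push_cast
    ring
  rw [blaschke, h_re]
  field_simp
  ring

theorem norm_one_sub_blaschke_le (hs : 0 ≤ s.re) (hz : 0 < z.re) (hsz : 2 * ‖z‖ ≤ ‖s‖) :
    ‖1 - blaschke z s‖ ≤ 4 * z.re / ‖s‖ := by
  have hden := add_conj_ne_zero_of_re_nonneg hs hz
  have hz0 : 0 < ‖z‖ := norm_pos_iff.mpr fun h => by simp [h] at hz
  have hden_ge : ‖s‖ / 2 ≤ ‖s + conj z‖ := by
    have := norm_sub_norm_le s (-conj z)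
    rw [sub_neg_eq_add, norm_neg, norm_conj] at this
    linarith
  rw [one_sub_blaschke hden, norm_div, norm_mul, norm_real, Real.norm_of_nonneg hz.le,
    RCLike.norm_ofNat]
  calc 2 * z.re / ‖s + conj z‖ ≤ 2 * z.re / (‖s‖ / 2) := by gcongr; linarith
    _ = 4 * z.re / ‖s‖ := by field_simp; ring

theorem differentiableOn_blaschke (hz : 0 < z.re) :
    DifferentiableOn ℂ (blaschke z) {s | 0 ≤ s.re} := fun _ hs =>
  ((differentiableAt_id.sub_const z).div (differentiableAt_id.add_const _)
    (add_conj_ne_zero_of_re_nonneg hs hz)).differentiableWithinAt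

end Blaschke

theorem conj_one_sub_mul_self_of_norm_eq_one {b : ℂ} (hb : ‖b‖ = 1) :
    conj (1 - b) * b = -(1 - b) := by
  rw [map_sub, map_one, sub_mul, conj_mul', hb]
  push_cast
  ring

theorem integral_one_sub_blaschke_mul_prod_mul_one_sub_blaschke {ι : Type*} (T : Finset ι)
    {w : ι → ℂ} (hw : ∀ k ∈ T, 0 < (w k).re) {a b : ℂ} (ha : 0 < a.re) (hb : 0 < b.re) :
    ∫ ω : ℝ, (1 - blaschke a (I * ω)) * (∏ k ∈ T, blaschke (w k) (I * ω)) *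
      (1 - blaschke b (I * ω)) = 0 := by
  refine integral_I_mul_eq_zero_of_differentiableOn
    (f := fun s => (1 - blaschke a s) * (∏ k ∈ T, blaschke (w k) s) * (1 - blaschke b s))
    (C := 4 * a.re * (4 * b.re)) (R₀ := 2 * max ‖a‖ ‖b‖) ?_ fun s hs hR => ?_
  · exact (((differentiableOn_const 1).sub (differentiableOn_blaschke ha)).mul
      (DifferentiableOn.fun_finsetProd fun k hk => differentiableOn_blaschke (hw k hk))).mul
      ((differentiableOn_const 1).sub (differentiableOn_blaschke hb))
  · have hprod : ‖∏ k ∈ T, blaschke (w k) s‖ ≤ 1 := by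
      rw [norm_prod]
      exact Finset.prod_le_one (fun _ _ => norm_nonneg _)
        fun k hk => norm_blaschke_le_one hs (hw k hk)
    have hs0 : 0 < ‖s‖ := by
      have := norm_pos_iff.mpr fun h : a = 0 => by simp [h] at ha
      linarith [le_max_left ‖a‖ ‖b‖]
    rw [norm_mul, norm_mul]
    calc ‖1 - blaschke a s‖ * ‖∏ k ∈ T, blaschke (w k) s‖ * ‖1 - blaschke b s‖
        ≤ 4 * a.re / ‖s‖ * 1 * (4 * b.re / ‖s‖) := by
          gcongr
          · exact norm_one_sub_blaschke_le hs ha (le_trans (by gcongr; exact le_max_left _ _) hR)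
          · exact norm_one_sub_blaschke_le hs hb (le_trans (by gcongr; exact le_max_right _ _) hR)
      _ = 4 * a.re * (4 * b.re) / ‖s‖ ^ 2 := by field_simp

/-- Mutual orthogonality of the terms in the telescoping expansion
`1 - ∏_k b_k = Σ_j (1 - b_j) ∏_{k<j} b_k` of a Blaschke product: for `i < j`,
`(1/(2π)) ∫ conj(1 - b_i(iω)) (∏_{k=i}^{j-1} b_k(iω)) (1 - b_j(iω)) dω = 0`. -/
theorem blaschke_telescoping_orthogonality
    (n : ℕ) (z : Fin n → ℂ) (hz : ∀ k, 0 < (z k).re)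
    (i j : Fin n) (hij : i < j) :
    (1 / (2 * Real.pi) : ℂ) *
        ∫ ω : ℝ,
          starRingEnd ℂ (1 - (Complex.I * (ω : ℂ) - z i) /
              (Complex.I * (ω : ℂ) + starRingEnd ℂ (z i))) *
            (∏ k ∈ Finset.Ico i j, (Complex.I * (ω : ℂ) - z k) /
              (Complex.I * (ω : ℂ) + starRingEnd ℂ (z k))) *
            (1 - (Complex.I * (ω : ℂ) - z j) /
              (Complex.I * (ω : ℂ) + starRingEnd ℂ (z j)))
      = 0 := by
  have hterm : ∀ ω : ℝ,
      conj (1 - blaschke (z i) (I * ω)) * (∏ k ∈ Finset.Ico i j, blaschke (z k) (I * ω)) *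
          (1 - blaschke (z j) (I * ω)) =
        -((1 - blaschke (z i) (I * ω)) * (∏ k ∈ Finset.Ioo i j, blaschke (z k) (I * ω)) *
          (1 - blaschke (z j) (I * ω))) := by
    intro ω
    have h_unit : ‖blaschke (z i) (I * ω)‖ = 1 := norm_blaschke_of_re_eq_zero (by simp) (hz i)
    rw [← Finset.Ioo_insert_left hij, Finset.prod_insert Finset.left_notMem_Ioo, ← mul_assoc,
      conj_one_sub_mul_self_of_norm_eq_one h_unit]
    ring
  change (1 / (2 * Real.pi) : ℂ) * ∫ ω : ℝ, conj (1 - blaschke (z i) (I * ω)) *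
    (∏ k ∈ Finset.Ico i j, blaschke (z k) (I * ω)) * (1 - blaschke (z j) (I * ω)) = 0
  rw [integral_congr_ae (Eventually.of_forall hterm), integral_neg,
    integral_one_sub_blaschke_mul_prod_mul_one_sub_blaschke _ (fun k _ => hz k) (hz i) (hz j),
    neg_zero, mul_zero]
end

section
/- Let p_1, …, p_n ∈ ℂ with Re p_i > 0 for all i, and let c_1, …, c_n ∈ ℂ. Then (1/(2π)) ∫_{−∞}^{∞} |Σ_{i=1}^n c_i · (2 Re p_i/(iω − p_i))|² dω = Σ_{i=1}^n Σ_{j=1}^n (4 Re p_i · Re p_j / (conj(p_i) + p_j)) · conj(c_i) · c_j. (Closed-form evaluation of the L² norm of a sum of weighted antistable first-order terms; this is the computation producing the factor 4Re(p_i)Re(p_j)/(p̄_i + p_j) in the pole-dependent part J₂* of Theorem 1.) -/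
/-!
Expanding the square turns the integral into a double sum of integrals
`∫ ((a + iω) (b - iω))⁻¹ dω` with `a = conj pᵢ`, `b = pⱼ` in the open right half-plane.
Both factors are in `L²`, so their product is integrable, and since `a + iω` and `b - iω`
never meet the branch cut, `log (a + iω) - log (b - iω)` is a primitive of
`i (a + b) ((a + iω) (b - iω))⁻¹` on the whole line. Its limits at `±∞` are `± π i`
(`log i - log (-i)` after factoring out `|ω|`), so the integral equals `2π / (a + b)`.
-/

open Complex ComplexConjugate Filter MeasureTheory Topology Real

lemma tendsto_log_add_I_mul_sub_log_sub_I_mul_atTop (a b : ℂ) :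
    Tendsto (fun ω : ℝ => log (a + I * ω) - log (b - I * ω)) atTop (𝓝 (π * I)) := by
  have hinv : Tendsto (fun ω : ℝ => (ω : ℂ)⁻¹) atTop (𝓝 0) := by
    simpa [Function.comp_def] using (continuous_ofReal.tendsto 0).comp tendsto_inv_atTop_zero
  have hA : Tendsto (fun ω : ℝ => a * (ω : ℂ)⁻¹ + I) atTop (𝓝 I) := by
    simpa using (hinv.const_mul a).add_const I
  have hB : Tendsto (fun ω : ℝ => b * (ω : ℂ)⁻¹ - I) atTop (𝓝 (-I)) := by
    simpa using (hinv.const_mul b).sub_const I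
  have hlog : Tendsto (fun ω : ℝ => log (a * (ω : ℂ)⁻¹ + I) - log (b * (ω : ℂ)⁻¹ - I))
      atTop (𝓝 (log I - log (-I))) :=
    ((continuousAt_clog (by simp [mem_slitPlane_iff])).tendsto.comp hA).sub
      ((continuousAt_clog (by simp [mem_slitPlane_iff])).tendsto.comp hB)
  rw [log_I, log_neg_I, show (π : ℂ) / 2 * I - -(π / 2) * I = π * I by ring] at hlog
  refine hlog.congr' ?_
  filter_upwards [eventually_gt_atTop 0, hA.eventually_ne I_ne_zero,
    hB.eventually_ne (neg_ne_zero.2 I_ne_zero)] with ω hω hA0 hB0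
  have hω' : (ω : ℂ) ≠ 0 := ofReal_ne_zero.2 hω.ne'
  rw [show a + I * ω = ω * (a * (ω : ℂ)⁻¹ + I) by field_simp,
    show b - I * ω = ω * (b * (ω : ℂ)⁻¹ - I) by field_simp,
    log_ofReal_mul hω hA0, log_ofReal_mul hω hB0]
  ring

lemma tendsto_log_add_I_mul_sub_log_sub_I_mul_atBot (a b : ℂ) :
    Tendsto (fun ω : ℝ => log (a + I * ω) - log (b - I * ω)) atBot (𝓝 (-(π * I))) := by
  refine ((tendsto_log_add_I_mul_sub_log_sub_I_mul_atTop b a).comp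
    tendsto_neg_atBot_atTop).neg.congr fun ω => ?_
  simp only [Function.comp_apply, ofReal_neg]
  ring_nf

lemma hasDerivAt_log_add_I_mul_sub_log_sub_I_mul {a b : ℂ} (ha : 0 < a.re) (hb : 0 < b.re)
    (ω : ℝ) :
    HasDerivAt (fun ω : ℝ => log (a + I * ω) - log (b - I * ω))
      (I * (a + b) * ((a + I * ω) * (b - I * ω))⁻¹) ω := by
  have hω : HasDerivAt (fun ω : ℝ => (ω : ℂ)) 1 ω := hasDerivAt_id ω |>.ofReal_comp
  have hA : a + I * ω ∈ slitPlane := mem_slitPlane_iff.2 (.inl (by simpa using ha))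
  have hB : b - I * ω ∈ slitPlane := mem_slitPlane_iff.2 (.inl (by simpa using hb))
  refine ((((hω.const_mul I).const_add a).clog_real hA).sub
    (((hω.const_mul I).const_sub b).clog_real hB)).congr_deriv ?_
  field_simp [slitPlane_ne_zero hA, slitPlane_ne_zero hB]
  ring

lemma integrable_inv_sq_add_sq {r : ℝ} (hr : r ≠ 0) :
    Integrable (fun x : ℝ => (r ^ 2 + x ^ 2)⁻¹) :=
  ((integrable_inv_one_add_sq.comp_div hr).const_mul (r ^ 2)⁻¹).congr
    (ae_of_all _ fun x => by field_simp)

lemma memLp_two_inv_add_I_mul {a : ℂ} (ha : a.re ≠ 0) :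
    MemLp (fun ω : ℝ => (a + I * ω)⁻¹) 2 := by
  refine (memLp_two_iff_integrable_sq_norm (by fun_prop)).2 ?_
  refine ((integrable_inv_sq_add_sq ha).comp_add_right a.im).congr (ae_of_all _ fun ω => ?_)
  simp only [norm_inv, inv_pow, Complex.sq_norm, normSq_apply, add_re, add_im, mul_re, mul_im,
    I_re, I_im, ofReal_re, ofReal_im, inv_inj]
  ring

lemma integrable_inv_add_I_mul_mul_sub_I_mul {a b : ℂ} (ha : a.re ≠ 0) (hb : b.re ≠ 0) :
    Integrable (fun ω : ℝ => ((a + I * ω) * (b - I * ω))⁻¹) := by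
  have hb' : MemLp (fun ω : ℝ => (b - I * ω)⁻¹) 2 := by
    have h : (fun ω : ℝ => (b - I * ω)⁻¹) = -fun ω : ℝ => (-b + I * ω)⁻¹ := by
      ext ω
      rw [Pi.neg_apply, ← inv_neg, neg_add, neg_neg, ← sub_eq_add_neg]
    exact h ▸ (memLp_two_inv_add_I_mul (by simpa using hb)).neg
  exact ((memLp_two_inv_add_I_mul ha).integrable_mul hb').congr
    (ae_of_all _ fun ω => (mul_inv _ _).symm)

theorem integral_inv_add_I_mul_mul_sub_I_mul {a b : ℂ} (ha : 0 < a.re) (hb : 0 < b.re) :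
    ∫ ω : ℝ, ((a + I * ω) * (b - I * ω))⁻¹ = 2 * π / (a + b) := by
  have hab : a + b ≠ 0 := fun h => by
    have := congrArg re h
    simp only [add_re, zero_re] at this
    linarith
  have h := integral_of_hasDerivAt_of_tendsto (hasDerivAt_log_add_I_mul_sub_log_sub_I_mul ha hb)
    ((integrable_inv_add_I_mul_mul_sub_I_mul ha.ne' hb.ne').const_mul (I * (a + b)))
    (tendsto_log_add_I_mul_sub_log_sub_I_mul_atBot a b)
    (tendsto_log_add_I_mul_sub_log_sub_I_mul_atTop a b)
  set J := ∫ ω : ℝ, ((a + I * ω) * (b - I * ω))⁻¹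
  rw [integral_const_mul] at h
  rw [eq_div_iff hab]
  linear_combination (-I) * h + (J * (a + b) - 2 * π) * I_sq

lemma conj_inv_I_mul_sub_mul_inv_I_mul_sub (a b : ℂ) (ω : ℝ) :
    conj (I * ω - a)⁻¹ * (I * ω - b)⁻¹ = ((conj a + I * ω) * (b - I * ω))⁻¹ := by
  rw [map_inv₀, ← mul_inv]
  congr 1
  simp only [map_sub, map_mul, conj_I, conj_ofReal]
  ring

lemma ofReal_norm_sum_sq {ι : Type*} (s : Finset ι) (z : ι → ℂ) :
    (‖∑ i ∈ s, z i‖ : ℂ) ^ 2 = ∑ i ∈ s, ∑ j ∈ s, conj (z i) * z j := by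
  rw [← conj_mul', map_sum, Finset.sum_mul_sum]

/-- Closed-form evaluation of the `L²` norm of a sum of weighted antistable
first-order terms:
`(1/(2π)) ∫ |Σ_i c_i (2 Re p_i/(iω - p_i))|² dω
  = Σ_i Σ_j (4 Re p_i Re p_j/(conj p_i + p_j)) conj(c_i) c_j`. -/
theorem antistable_sum_norm_eval
    (n : ℕ) (p : Fin n → ℂ) (hp : ∀ i, 0 < (p i).re) (c : Fin n → ℂ) :
    (1 / (2 * Real.pi) : ℂ) *
        ∫ ω : ℝ, (‖∑ i, c i *
          ((2 * ((p i).re : ℂ)) / (Complex.I * (ω : ℂ) - p i))‖ ^ 2 : ℂ)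
      = ∑ i, ∑ j, (4 * ((p i).re : ℂ) * ((p j).re : ℂ) /
          (starRingEnd ℂ (p i) + p j)) * starRingEnd ℂ (c i) * c j := by
  have hconj : ∀ i, 0 < (conj (p i)).re := by simpa using hp
  have hexpand : ∀ ω : ℝ,
      (‖∑ i, c i * (2 * ((p i).re : ℂ) / (I * ω - p i))‖ : ℂ) ^ 2 =
        ∑ i, ∑ j, 4 * (p i).re * (p j).re * conj (c i) * c j *
          ((conj (p i) + I * ω) * (p j - I * ω))⁻¹ := by
    intro ω
    rw [ofReal_norm_sum_sq]
    refine Finset.sum_congr rfl fun i _ => Finset.sum_congr rfl fun j _ => ?_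
    rw [← conj_inv_I_mul_sub_mul_inv_I_mul_sub]
    simp only [div_eq_mul_inv, map_mul, map_ofNat, conj_ofReal]
    ring
  have hint : ∀ i j, Integrable fun ω : ℝ => 4 * (p i).re * (p j).re * conj (c i) * c j *
      ((conj (p i) + I * ω) * (p j - I * ω))⁻¹ := fun i j =>
    (integrable_inv_add_I_mul_mul_sub_I_mul (hconj i).ne' (hp j).ne').const_mul _
  simp_rw [hexpand]
  rw [integral_finsetSum _ fun i _ => integrable_finsetSum _ fun j _ => hint i j, Finset.mul_sum]
  refine Finset.sum_congr rfl fun i _ => ?_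
  rw [integral_finsetSum _ fun j _ => hint i j, Finset.mul_sum]
  refine Finset.sum_congr rfl fun j _ => ?_
  rw [integral_const_mul, integral_inv_add_I_mul_mul_sub_I_mul (hconj i) (hp j)]
  field_simp
end

section
/- Let z_1, …, z_n ∈ ℂ be distinct with Re z_i > 0, and let Y be a rational function over ℂ that is proper (numerator degree at most denominator degree) and has no poles in the closed right half-plane {s : Re s ≥ 0}. Then there exists a rational function T, proper and with no poles in the closed right half-plane, such that as rational functions ∏_{k=1}^n ((s + conj(z_k))/(s − z_k)) · Y(s) = T(s) + Σ_{i=1}^n c_i/(s − z_i), where c_i = 2 Re z_i · (∏_{k≠i} (z_i + conj(z_k))/(z_i − z_k)) · Y(z_i). (Scalar form of Lemma 1: partial-fraction splitting of the inverse Blaschke product times a stable function into a stable part plus explicit antistable residue terms.) -/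
/-!
Put `F = (∏ₖ (s + z̄ₖ)/(s - zₖ)) · Y` and `T = F - ∑ᵢ cᵢ/(s - zᵢ)`. The proper rational functions
are the valuation ring of the place at infinity, and `T` is built by ring operations from proper
pieces, so it is proper. For stability, `∏ₖ (s - zₖ) · F = ∏ₖ (s + z̄ₖ) · Y` has no pole in the
closed right half-plane, so there `F` has at most simple poles, located at the `zᵢ`, and `cᵢ` is
exactly the residue `((s - zᵢ) F)(zᵢ)`, because `zᵢ + z̄ᵢ = 2 Re zᵢ`. Subtracting these principal
parts leaves a function that is regular at every point of the closed right half-plane.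
-/

open scoped Polynomial

namespace RatFunc

variable {K : Type*} [Field K]

theorem X_sub_C_ne_zero (a : K) : (X - C a : RatFunc K) ≠ 0 := by
  rw [← algebraMap_X, ← algebraMap_C, ← map_sub]
  exact algebraMap_ne_zero (Polynomial.X_sub_C_ne_zero a)

section InftyValuation

open WithZero

variable [DecidableEq (RatFunc K)]

theorem inftyValuation_le_one_iff (x : RatFunc K) :
    inftyValuation K x ≤ 1 ↔ x.num.degree ≤ x.denom.degree := by
  by_cases hx : x = 0
  · simp [hx]
  rw [inftyValuation_apply, inftyValuation_of_nonzero K hx, ← exp_zero, exp_le_exp, intDegree,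
    sub_nonpos, Polynomial.degree_eq_natDegree (num_ne_zero hx),
    Polynomial.degree_eq_natDegree x.denom_ne_zero]
  norm_cast

theorem inftyValuation_X_sub_C (a : K) : inftyValuation K (X - C a) = exp 1 := by
  rw [← algebraMap_X, ← algebraMap_C, ← map_sub, inftyValuation_apply,
    inftyValuation.polynomial K (Polynomial.X_sub_C_ne_zero a), Polynomial.natDegree_X_sub_C]
  rfl

theorem inftyValuation_X_add_C_div_X_sub_C (a b : K) :
    inftyValuation K ((X + C b) / (X - C a)) = 1 := by
  rw [map_div₀, ← sub_neg_eq_add, ← map_neg, inftyValuation_X_sub_C, inftyValuation_X_sub_C,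
    div_self exp_ne_zero]

theorem inftyValuation_C_div_X_sub_C_le_one (a c : K) :
    inftyValuation K (C c / (X - C a)) ≤ 1 := by
  rcases eq_or_ne c 0 with rfl | hc
  · simp
  rw [map_div₀, inftyValuation.C K hc, inftyValuation_X_sub_C, one_div, ← exp_neg, ← exp_zero,
    exp_le_exp]
  norm_num

end InftyValuation

def regularAt (a : K) : Subring (RatFunc K) where
  carrier := {f | f.denom.eval a ≠ 0}
  mul_mem' {f g} hf hg h := mul_ne_zero hf hg <| by
    simpa using Polynomial.eval_eq_zero_of_dvd_of_eval_eq_zero (denom_mul_dvd f g) h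
  one_mem' := by simp
  add_mem' {f g} hf hg h := mul_ne_zero hf hg <| by
    simpa using Polynomial.eval_eq_zero_of_dvd_of_eval_eq_zero (denom_add_dvd f g) h
  zero_mem' := by simp
  neg_mem' {f} hf h := by
    have hdvd := denom_mul_dvd (C (-1)) f
    rw [denom_C, one_mul, map_neg, map_one, neg_one_mul] at hdvd
    exact hf (Polynomial.eval_eq_zero_of_dvd_of_eval_eq_zero hdvd h)

theorem mem_regularAt {a : K} {f : RatFunc K} : f ∈ regularAt a ↔ f.denom.eval a ≠ 0 := Iff.rfl

section RegularAt

variable {a x : K}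

theorem algebraMap_div_mem_regularAt {p q : K[X]} (hq : q.eval a ≠ 0) :
    algebraMap K[X] (RatFunc K) p / algebraMap K[X] (RatFunc K) q ∈ regularAt a := by
  obtain ⟨u, hu⟩ := denom_div_dvd p q
  intro h
  exact hq (by rw [hu, Polynomial.eval_mul, h, zero_mul])

theorem eval_algebraMap_div {p q : K[X]} (hq : q.eval a ≠ 0) :
    eval (RingHom.id K) a (algebraMap K[X] (RatFunc K) p / algebraMap K[X] (RatFunc K) q) =
      p.eval a / q.eval a := by
  have hq' : algebraMap K[X] (RatFunc K) q ≠ 0 := algebraMap_ne_zero fun h => hq (by simp [h])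
  have hqa : eval (RingHom.id K) a (algebraMap K[X] (RatFunc K) q) = q.eval a := by simp
  rw [eq_div_iff hq, ← hqa, ← eval_mul _ _ (algebraMap_div_mem_regularAt hq) (by simp),
    div_mul_cancel₀ _ hq']
  simp

theorem X_mem_regularAt : (X : RatFunc K) ∈ regularAt a := by
  simp [mem_regularAt]

theorem C_mem_regularAt (c : K) : C c ∈ regularAt a := by
  simp [mem_regularAt]

theorem X_add_C_div_X_sub_C_mem_regularAt (b : K) (h : x ≠ a) :
    (X + C b) / (X - C a) ∈ regularAt x := by
  rw [← algebraMap_X, ← algebraMap_C, ← algebraMap_C, ← map_add, ← map_sub]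
  exact algebraMap_div_mem_regularAt (by simpa [sub_eq_zero] using h)

theorem eval_X_add_C_div_X_sub_C (b : K) (h : x ≠ a) :
    eval (RingHom.id K) x ((X + C b) / (X - C a)) = (x + b) / (x - a) := by
  rw [← algebraMap_X, ← algebraMap_C, ← algebraMap_C, ← map_add, ← map_sub,
    eval_algebraMap_div (by simpa [sub_eq_zero] using h)]
  simp

theorem inv_X_sub_C_mem_regularAt (h : x ≠ a) : (X - C a)⁻¹ ∈ regularAt x := by
  rw [← algebraMap_X, ← algebraMap_C, ← map_sub, inv_eq_one_div,
    ← map_one (algebraMap K[X] (RatFunc K))]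
  exact algebraMap_div_mem_regularAt (by simpa [sub_eq_zero] using h)

theorem C_div_X_sub_C_mem_regularAt (c : K) (h : x ≠ a) : C c / (X - C a) ∈ regularAt x := by
  rw [div_eq_mul_inv]
  exact mul_mem (C_mem_regularAt c) (inv_X_sub_C_mem_regularAt h)

theorem inv_prod_X_sub_C_mem_regularAt {ι : Type*} {s : Finset ι} {z : ι → K}
    (h : ∀ i ∈ s, x ≠ z i) : (∏ i ∈ s, (X - C (z i)))⁻¹ ∈ regularAt x := by
  rw [← Finset.prod_inv_distrib]
  exact prod_mem fun i hi => inv_X_sub_C_mem_regularAt (h i hi)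

theorem eval_prod_of_mem_regularAt {ι : Type*} {s : Finset ι} {f : ι → RatFunc K}
    (hf : ∀ i ∈ s, f i ∈ regularAt a) :
    eval (RingHom.id K) a (∏ i ∈ s, f i) = ∏ i ∈ s, eval (RingHom.id K) a (f i) := by
  classical
  induction s using Finset.induction_on with
  | empty => simp
  | insert j s hj ih =>
    have hs : ∀ i ∈ s, f i ∈ regularAt a := fun i hi => hf i (Finset.mem_insert_of_mem hi)
    rw [Finset.prod_insert hj, Finset.prod_insert hj,
      eval_mul _ _ (hf j (Finset.mem_insert_self j s)) (prod_mem hs), ih hs]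

theorem div_X_sub_C_mem_regularAt {g : RatFunc K} (hg : g ∈ regularAt a)
    (h0 : eval (RingHom.id K) a g = 0) : g / (X - C a) ∈ regularAt a := by
  rw [mem_regularAt] at hg
  have hroot : g.num.IsRoot a := by
    simpa [eval, div_eq_zero_iff, hg] using h0
  obtain ⟨q, hq⟩ := Polynomial.dvd_iff_isRoot.2 hroot
  have hg' : g / (X - C a) =
      algebraMap K[X] (RatFunc K) q / algebraMap K[X] (RatFunc K) g.denom := by
    conv_lhs => rw [← num_div_denom g, hq]
    rw [map_mul, map_sub, algebraMap_X, algebraMap_C, mul_div_assoc,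
      mul_div_cancel_left₀ _ (X_sub_C_ne_zero a)]
  rw [hg']
  exact algebraMap_div_mem_regularAt hg

theorem sub_C_residue_div_mem_regularAt {f : RatFunc K} (hf : (X - C a) * f ∈ regularAt a) :
    f - C (eval (RingHom.id K) a ((X - C a) * f)) / (X - C a) ∈ regularAt a := by
  have hsplit : f - C (eval (RingHom.id K) a ((X - C a) * f)) / (X - C a) =
      ((X - C a) * f - C (eval (RingHom.id K) a ((X - C a) * f))) / (X - C a) := by
    rw [sub_div, mul_div_cancel_left₀ f (X_sub_C_ne_zero a)]
  rw [hsplit]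
  refine div_X_sub_C_mem_regularAt (sub_mem hf (C_mem_regularAt _)) ?_
  rw [sub_eq_add_neg, ← map_neg, eval_add _ _ hf (C_mem_regularAt _), eval_C]
  simp

theorem sub_sum_C_residue_div_mem_regularAt {ι : Type*} [Fintype ι] {z : ι → K}
    (hz : Function.Injective z) {f : RatFunc K} (hf : (∏ i, (X - C (z i))) * f ∈ regularAt x) :
    f - ∑ i, C (eval (RingHom.id K) (z i) ((X - C (z i)) * f)) / (X - C (z i)) ∈
      regularAt x := by
  classical
  by_cases hx : ∃ i, z i = x
  · obtain ⟨i, rfl⟩ := hx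
    have hne : ∀ j ∈ Finset.univ.erase i, z i ≠ z j :=
      fun j hj => hz.ne (Finset.ne_of_mem_erase hj).symm
    have hsimple : (X - C (z i)) * f =
        (∏ j ∈ Finset.univ.erase i, (X - C (z j)))⁻¹ * ((∏ j, (X - C (z j))) * f) := by
      have hE : ∏ j ∈ Finset.univ.erase i, (X - C (z j)) ≠ 0 :=
        Finset.prod_ne_zero_iff.2 fun j _ => X_sub_C_ne_zero (z j)
      rw [← Finset.mul_prod_erase _ _ (Finset.mem_univ i)]
      field_simp
    rw [← Finset.add_sum_erase _ _ (Finset.mem_univ i), ← sub_sub]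
    refine sub_mem (sub_C_residue_div_mem_regularAt ?_)
      (sum_mem fun j hj => C_div_X_sub_C_mem_regularAt _ (hne j hj))
    rw [hsimple]
    exact mul_mem (inv_prod_X_sub_C_mem_regularAt hne) hf
  · simp only [not_exists] at hx
    refine sub_mem ?_ (sum_mem fun i _ => C_div_X_sub_C_mem_regularAt _ (Ne.symm (hx i)))
    rw [← inv_mul_cancel_left₀ (Finset.prod_ne_zero_iff.2 fun i _ => X_sub_C_ne_zero (z i)) f]
    exact mul_mem (inv_prod_X_sub_C_mem_regularAt fun i _ => Ne.symm (hx i)) hf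

theorem prod_X_sub_C_mul_prod_X_add_C_div_X_sub_C_mul {ι : Type*} [Fintype ι] (z b : ι → K)
    (Y : RatFunc K) :
    (∏ k, (X - C (z k))) * ((∏ k, (X + C (b k)) / (X - C (z k))) * Y) =
      (∏ k, (X + C (b k))) * Y := by
  rw [← mul_assoc, ← Finset.prod_mul_distrib]
  congr 1
  exact Finset.prod_congr rfl fun k _ => mul_div_cancel₀ _ (X_sub_C_ne_zero _)

theorem eval_X_sub_C_mul_prod_X_add_C_div_X_sub_C_mul {ι : Type*} [Fintype ι] [DecidableEq ι]
    {z : ι → K} (hz : Function.Injective z) (b : ι → K) {Y : RatFunc K} (i : ι)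
    (hY : Y ∈ regularAt (z i)) :
    eval (RingHom.id K) (z i) ((X - C (z i)) * ((∏ k, (X + C (b k)) / (X - C (z k))) * Y)) =
      (z i + b i) * (∏ k ∈ Finset.univ.erase i, (z i + b k) / (z i - z k)) *
        eval (RingHom.id K) (z i) Y := by
  have hne : ∀ k ∈ Finset.univ.erase i, z i ≠ z k :=
    fun k hk => hz.ne (Finset.ne_of_mem_erase hk).symm
  have hfactors : ∀ k ∈ Finset.univ.erase i, (X + C (b k)) / (X - C (z k)) ∈ regularAt (z i) :=
    fun k hk => X_add_C_div_X_sub_C_mem_regularAt _ (hne k hk)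
  have hnumer : X + C (b i) ∈ regularAt (z i) := add_mem X_mem_regularAt (C_mem_regularAt _)
  have hcancel : (X - C (z i)) * ((∏ k, (X + C (b k)) / (X - C (z k))) * Y) =
      (X + C (b i)) * (∏ k ∈ Finset.univ.erase i, (X + C (b k)) / (X - C (z k))) * Y := by
    rw [← Finset.mul_prod_erase _ _ (Finset.mem_univ i)]
    field_simp [X_sub_C_ne_zero]
  rw [hcancel, eval_mul _ _ (mul_mem hnumer (prod_mem hfactors)) hY,
    eval_mul _ _ hnumer (prod_mem hfactors), eval_prod_of_mem_regularAt hfactors,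
    Finset.prod_congr rfl fun k hk => eval_X_add_C_div_X_sub_C _ (hne k hk),
    eval_add _ _ X_mem_regularAt (C_mem_regularAt _), eval_X, eval_C, RingHom.id_apply]

end RegularAt

end RatFunc

open RatFunc

/-- Scalar form of Lemma 1: partial-fraction splitting of the inverse Blaschke
product times a stable proper rational function `Y` into a stable proper part `T`
plus explicit antistable residue terms:
`∏_k ((s + conj z_k)/(s - z_k)) Y(s) = T(s) + Σ_i c_i/(s - z_i)` with
`c_i = 2 Re z_i (∏_{k≠i} (z_i + conj z_k)/(z_i - z_k)) Y(z_i)`. -/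
theorem inverse_blaschke_partial_fraction_scalar
    (n : ℕ) (z : Fin n → ℂ) (hz : ∀ i, 0 < (z i).re)
    (hdist : Function.Injective z)
    (Y : RatFunc ℂ)
    (hY_proper : Y.num.degree ≤ Y.denom.degree)
    (hY_stable : ∀ x : ℂ, Polynomial.eval x Y.denom = 0 → x.re < 0) :
    ∃ T : RatFunc ℂ,
      T.num.degree ≤ T.denom.degree ∧
      (∀ x : ℂ, Polynomial.eval x T.denom = 0 → x.re < 0) ∧
      (∏ k, (RatFunc.X + RatFunc.C (starRingEnd ℂ (z k))) /
          (RatFunc.X - RatFunc.C (z k))) * Y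
        = T + ∑ i, RatFunc.C ((2 * ((z i).re : ℂ)) *
            (∏ k ∈ Finset.univ.erase i,
              (z i + starRingEnd ℂ (z k)) / (z i - z k)) *
            RatFunc.eval (RingHom.id ℂ) (z i) Y) /
          (RatFunc.X - RatFunc.C (z i)) := by
  classical
  set F := (∏ k, (X + C (starRingEnd ℂ (z k))) / (X - C (z k))) * Y
  have hY_regular : ∀ x : ℂ, 0 ≤ x.re → Y ∈ regularAt x :=
    fun x hx h => hx.not_gt (hY_stable x h)
  have hresidue : ∀ i, eval (RingHom.id ℂ) (z i) ((X - C (z i)) * F) =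
      (2 * ((z i).re : ℂ)) * (∏ k ∈ Finset.univ.erase i,
        (z i + starRingEnd ℂ (z k)) / (z i - z k)) * eval (RingHom.id ℂ) (z i) Y := fun i => by
    rw [eval_X_sub_C_mul_prod_X_add_C_div_X_sub_C_mul hdist _ i (hY_regular _ (hz i).le),
      Complex.add_conj]
    push_cast
    ring
  refine ⟨_, ?_, fun x hx => ?_, (sub_add_cancel F _).symm⟩
  · rw [← inftyValuation_le_one_iff, ← Valuation.mem_integer_iff]
    refine sub_mem (mul_mem (prod_mem fun k _ => ?_) ?_) (sum_mem fun i _ => ?_)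
    · exact (inftyValuation_X_add_C_div_X_sub_C _ _).le
    · exact (inftyValuation_le_one_iff Y).2 hY_proper
    · exact inftyValuation_C_div_X_sub_C_le_one _ _
  · by_contra! hre
    have hcleared : (∏ k, (X - C (z k))) * F ∈ regularAt x := by
      rw [prod_X_sub_C_mul_prod_X_add_C_div_X_sub_C_mul]
      exact mul_mem (prod_mem fun k _ => add_mem X_mem_regularAt (C_mem_regularAt _))
        (hY_regular x hre)
    have hT := sub_sum_C_residue_div_mem_regularAt hdist hcleared
    simp only [hresidue] at hT
    exact hT hx
end
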